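/- For every lattice point p = (i,j,k,ℓ,m) ∈ ℤ⁵ with t = φ(p), the φ-images of the six lattice points (i,j,k,ℓ,m), (i+1,j,k,ℓ,m), (i+1,j−1,k,ℓ,m), (i+1,j,k−1,ℓ,m), (i+1,j,k,ℓ−1,m), (i+1,j,k,ℓ,m−1) (the vertices of the mystic chord rooted at p) form exactly the six-element set M(t+3) = {t+3, t+4, t+6, t+8, t+10, t} in ℤ/12ℤ; in particular these six pitch classes are pairwise distinct. -/
import Mathlib


def phi (i j k l m : ℤ) : ZMod 12 := ((4 * i + 8 * j + 10 * k + l + 6 * m : ℤ) : ZMod 12)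

def W (t : ZMod 12) : Finset (ZMod 12) := {t, t + 1, t + 4, t + 6, t + 8, t + 10}

def M (t : ZMod 12) : Finset (ZMod 12) := {t, t + 1, t + 3, t + 5, t + 7, t + 9}

def WT (t : ZMod 12) : Finset (ZMod 12) := {t, t + 2, t + 4, t + 6, t + 8, t + 10}

lemma key (t : ZMod 12) :
    ({t, t + 4, t + 8, t + 6, t + 3, t + 10} : Finset (ZMod 12)) = M (t + 3) ∧
    ({t, t + 4, t + 8, t + 6, t + 3, t + 10} : Finset (ZMod 12)).card = 6 := by
  revert t; decide

theorem mystic_pitch_classes (i j k l m : ℤ) :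
    ({phi i j k l m, phi (i+1) j k l m, phi (i+1) (j-1) k l m, phi (i+1) j (k-1) l m,
        phi (i+1) j k (l-1) m, phi (i+1) j k l (m-1)} : Finset (ZMod 12)) =
        M (phi i j k l m + 3) ∧
      ({phi i j k l m, phi (i+1) j k l m, phi (i+1) (j-1) k l m, phi (i+1) j (k-1) l m,
        phi (i+1) j k (l-1) m, phi (i+1) j k l (m-1)} : Finset (ZMod 12)).card = 6 := by
  have h1 : phi (i+1) j k l m = phi i j k l m + 4 := by
    simp only [phi]; push_cast; ring
  have h2 : phi (i+1) (j-1) k l m = phi i j k l m + 8 := by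
    simp only [phi]; push_cast
    have : (12 : ZMod 12) = 0 := by decide
    linear_combination (-1 : ZMod 12) * this
  have h3 : phi (i+1) j (k-1) l m = phi i j k l m + 6 := by
    simp only [phi]; push_cast
    have : (12 : ZMod 12) = 0 := by decide
    linear_combination (-1 : ZMod 12) * this
  have h4 : phi (i+1) j k (l-1) m = phi i j k l m + 3 := by
    simp only [phi]; push_cast; ring
  have h5 : phi (i+1) j k l (m-1) = phi i j k l m + 10 := by
    simp only [phi]; push_cast
    have : (12 : ZMod 12) = 0 := by decide
    linear_combination (-1 : ZMod 12) * this
  rw [h1, h2, h3, h4, h5]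
  exact key _
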